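/- arXiv:2510.02911 — 3 statements merged into one kernel-verified Lean document; each statement's English description precedes it below -/
import Mathlib

section
/- Let X be a finite multigraph, c a feasible circulation function on X, and e a directed edge of X. Then e is c-forced or c-forbidden if and only if the endpoints of e belong to the same accessibility class of c. -/
/-- A finite multigraph: vertices, edges, and two endpoint maps. -/
structure Multigraph where
  V : Type
  E : Type
  src : E → V
  tgt : E → V

namespace Multigraph

/-- A (non-null) directed cycle of length `n`: a cyclic sequence of edges, each
with a direction of traversal (`true` = from `src` to `tgt`), such that the head
of each directed edge is the tail of the next. -/
structure DCycle (X : Multigraph) where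
  n : ℕ
  npos : 0 < n
  edge : ZMod n → X.E
  dir : ZMod n → Bool
  head_eq_tail : ∀ i : ZMod n,
    (cond (dir i) (X.tgt (edge i)) (X.src (edge i))) =
    (cond (dir (i + 1)) (X.src (edge (i + 1))) (X.tgt (edge (i + 1))))

/-- An orientation of a multigraph: a choice of direction for each edge
(`true` = oriented from `src` to `tgt`). -/
abbrev Orientation (X : Multigraph) := X.E → Bool

/-- The circulation of an orientation `R` around a directed cycle: the number of
edges of the cycle traversed in agreement with `R` minus the number traversed
in disagreement. -/
def circulation (X : Multigraph) (R : X.Orientation) (C : X.DCycle) : ℤ :=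
  haveI : NeZero C.n := ⟨C.npos.ne'⟩
  ∑ i : ZMod C.n, if C.dir i = R (C.edge i) then (1 : ℤ) else -1

/-- A directed cycle is forward relative to `R` if all its edges are traversed
in agreement with `R`. -/
def IsForward (X : Multigraph) (R : X.Orientation) (C : X.DCycle) : Prop :=
  ∀ i : ZMod C.n, C.dir i = R (C.edge i)

/-- One step along an edge in the direction given by the orientation `R`. -/
def Step (X : Multigraph) (R : X.Orientation) (x y : X.V) : Prop :=
  ∃ e : X.E, (R e = true ∧ X.src e = x ∧ X.tgt e = y) ∨
    (R e = false ∧ X.tgt e = x ∧ X.src e = y)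

/-- `y` is accessible from `x` relative to `R`: there is a (possibly null)
forward path from `x` to `y`. -/
def Accessible (X : Multigraph) (R : X.Orientation) : X.V → X.V → Prop :=
  Relation.ReflTransGen (X.Step R)

/-- `x` and `y` are mutually accessible relative to `R` (the equivalence relation
whose classes are the accessibility classes). -/
def MutuallyAccessible (X : Multigraph) (R : X.Orientation) (x y : X.V) : Prop :=
  X.Accessible R x y ∧ X.Accessible R y x

end Multigraph

namespace Multigraph

/-- The directed edge `(e, b)` is `c`-forced: it belongs to (i.e. agrees with)
every orientation with circulation function `c`. -/
def CForced (X : Multigraph) (c : X.DCycle → ℤ) (e : X.E) (b : Bool) : Prop :=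
  ∀ R : X.Orientation, (∀ C : X.DCycle, X.circulation R C = c C) → R e = b

/-- The directed edge `(e, b)` is `c`-forbidden: it belongs to no orientation with
circulation function `c`. -/
def CForbidden (X : Multigraph) (c : X.DCycle → ℤ) (e : X.E) (b : Bool) : Prop :=
  ∀ R : X.Orientation, (∀ C : X.DCycle, X.circulation R C = c C) → R e ≠ b

end Multigraph

/-!
Write `tail R f`, `head R f` for the endpoints of `f` as oriented by `R`. If `tail R e` is not
accessible from `head R e`, let `A` be the set of vertices accessible from `head R e`. No edge
leaves `A`, so reversing every edge that enters `A` changes each edge's contribution to a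
circulation by the coboundary of `2 • 1_A`, which sums to zero around any cycle: this gives an
orientation with the same circulation that disagrees with `R` at `e`. Conversely, if `tail R e`
is accessible from `head R e`, then `e` lies on an `R`-forward cycle `C`. Its circulation `|C|`
is the largest possible, so every orientation with the same circulation traverses `C` forward
as well, hence agrees with `R` at `e`. So the endpoints of `e` are mutually accessible for
every orientation with circulation `c` iff all these orientations agree at `e`, i.e. iff `e` is
`c`-forced or `c`-forbidden.
-/

theorem Relation.ReflTransGen.exists_nat_path {α : Type*} {r : α → α → Prop} {a b : α}
    (h : Relation.ReflTransGen r a b) :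
    ∃ (m : ℕ) (v : ℕ → α), v 0 = a ∧ v m = b ∧ ∀ k < m, r (v k) (v (k + 1)) := by
  induction h with
  | refl => exact ⟨0, fun _ => a, rfl, rfl, by simp⟩
  | @tail b c _ hbc ih =>
    obtain ⟨m, v, hv0, hvm, hv⟩ := ih
    refine ⟨m + 1, fun k => if k ≤ m then v k else c, by simpa using hv0, by simp, ?_⟩
    intro k hk
    rcases Nat.lt_succ_iff_lt_or_eq.1 hk with hk | rfl
    · simpa [hk.le, Nat.succ_le_of_lt hk] using hv k hk
    · simpa [hvm] using hbc

theorem Relation.ReflTransGen.exists_zmod_cycle {α : Type*} {r : α → α → Prop} {a b : α}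
    (h : Relation.ReflTransGen r a b) (hba : r b a) :
    ∃ n, 0 < n ∧ ∃ w : ZMod n → α, w 0 = a ∧ ∀ i, r (w i) (w (i + 1)) := by
  obtain ⟨m, v, hv0, hvm, hv⟩ := h.exists_nat_path
  refine ⟨m + 1, m.succ_pos, fun i => v i.val, by simpa using hv0, fun i => ?_⟩
  have hi : i.val < m + 1 := ZMod.val_lt i
  show r (v i.val) (v (i + 1).val)
  rw [ZMod.val_add, ZMod.val_one_eq_one_mod, Nat.add_mod_mod]
  rcases Nat.lt_succ_iff_lt_or_eq.1 hi with hi | hi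
  · rw [Nat.mod_eq_of_lt (by omega)]
    exact hv _ hi
  · rw [hi, Nat.mod_self, hv0, hvm]
    exact hba

namespace Multigraph

variable {X : Multigraph}

def tail (R : X.Orientation) (f : X.E) : X.V := cond (R f) (X.src f) (X.tgt f)

def head (R : X.Orientation) (f : X.E) : X.V := cond (R f) (X.tgt f) (X.src f)

theorem step_iff {R : X.Orientation} {x y : X.V} :
    X.Step R x y ↔ ∃ f, tail R f = x ∧ head R f = y := by
  refine exists_congr fun f => ?_
  cases h : R f <;> simp [tail, head, h]

theorem step_tail_head (R : X.Orientation) (f : X.E) : X.Step R (tail R f) (head R f) :=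
  step_iff.2 ⟨f, rfl, rfl⟩

theorem mutuallyAccessible_src_tgt_iff {R : X.Orientation} {e : X.E} :
    X.MutuallyAccessible R (X.src e) (X.tgt e) ↔ X.Accessible R (head R e) (tail R e) := by
  have hstep : X.Accessible R (tail R e) (head R e) := .single (step_tail_head R e)
  unfold MutuallyAccessible
  cases h : R e <;> simp_all [tail, head]

theorem exists_follows_of_accessible {R : X.Orientation} {e : X.E} {x : X.V}
    (h : X.Accessible R (head R e) x) :
    ∃ f, Relation.ReflTransGen (fun f g => head R f = tail R g) e f ∧ head R f = x := by
  induction h with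
  | refl => exact ⟨e, .refl, rfl⟩
  | tail _ hyz ih =>
    obtain ⟨f, hef, rfl⟩ := ih
    obtain ⟨g, hg, rfl⟩ := step_iff.1 hyz
    exact ⟨g, hef.tail hg.symm, rfl⟩

theorem exists_isForward_of_accessible {R : X.Orientation} {e : X.E}
    (h : X.Accessible R (head R e) (tail R e)) :
    ∃ C : X.DCycle, X.IsForward R C ∧ ∃ i, C.edge i = e := by
  obtain ⟨f, hef, hfe⟩ := exists_follows_of_accessible h
  obtain ⟨n, hn, w, hw0, hw⟩ := hef.exists_zmod_cycle hfe
  exact ⟨⟨n, hn, w, fun i => R (w i), hw⟩, fun _ => rfl, 0, hw0⟩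

namespace DCycle

variable (C : X.DCycle)

instance : NeZero C.n := ⟨C.npos.ne'⟩

def tail (i : ZMod C.n) : X.V := cond (C.dir i) (X.src (C.edge i)) (X.tgt (C.edge i))

def head (i : ZMod C.n) : X.V := cond (C.dir i) (X.tgt (C.edge i)) (X.src (C.edge i))

theorem sum_head_eq_sum_tail {M : Type*} [AddCommMonoid M] (g : X.V → M) :
    ∑ i, g (C.head i) = ∑ i, g (C.tail i) :=
  Fintype.sum_equiv (Equiv.addRight 1) _ _ fun i => congrArg g (C.head_eq_tail i)

end DCycle

theorem circulation_eq_of_potential {R R' : X.Orientation} (g : X.V → ℤ)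
    (h : ∀ f d, (if d = R' f then (1 : ℤ) else -1) =
      (if d = R f then 1 else -1) + g (cond d (X.src f) (X.tgt f)) - g (cond d (X.tgt f) (X.src f)))
    (C : X.DCycle) : X.circulation R' C = X.circulation R C := by
  have hsum := C.sum_head_eq_sum_tail g
  simp only [DCycle.head, DCycle.tail] at hsum
  simp only [circulation, h, Finset.sum_add_distrib, Finset.sum_sub_distrib, hsum]
  ring

open Classical in
noncomputable def flipCut (R : X.Orientation) (A : Set X.V) : X.Orientation :=
  fun f => if (X.src f ∈ A ↔ X.tgt f ∈ A) then R f else !R f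

theorem circulation_flipCut {R : X.Orientation} {A : Set X.V}
    (hA : ∀ f, tail R f ∈ A → head R f ∈ A) (C : X.DCycle) :
    X.circulation (flipCut R A) C = X.circulation R C := by
  classical
  refine circulation_eq_of_potential (fun v => if v ∈ A then 2 else 0) (fun f d => ?_) C
  have hf := hA f
  simp only [flipCut, tail, head] at hf ⊢
  by_cases hs : X.src f ∈ A <;> by_cases ht : X.tgt f ∈ A <;> cases d <;>
    obtain hR | hR := Bool.eq_false_or_eq_true (R f) <;> simp_all

theorem flipCut_apply_of_head_mem_of_tail_not_mem {R : X.Orientation} {A : Set X.V} {f : X.E}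
    (hhead : head R f ∈ A) (htail : tail R f ∉ A) : flipCut R A f = !R f := by
  have hcut : ¬(X.src f ∈ A ↔ X.tgt f ∈ A) := by
    cases h : R f <;> simp_all [tail, head]
  simp [flipCut, hcut]

theorem exists_ne_of_not_accessible {R : X.Orientation} {e : X.E}
    (h : ¬X.Accessible R (head R e) (tail R e)) :
    ∃ R' : X.Orientation, (∀ C, X.circulation R' C = X.circulation R C) ∧ R' e ≠ R e := by
  let A : Set X.V := {v | X.Accessible R (head R e) v}
  refine ⟨flipCut R A, circulation_flipCut (fun f hf => hf.tail (step_tail_head R f)), ?_⟩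
  rw [flipCut_apply_of_head_mem_of_tail_not_mem (A := A) .refl h]
  exact Bool.not_ne_self _

theorem circulation_eq_length_iff {R : X.Orientation} {C : X.DCycle} :
    X.circulation R C = C.n ↔ X.IsForward R C := by
  have hle : ∀ i ∈ Finset.univ, (if C.dir i = R (C.edge i) then (1 : ℤ) else -1) ≤ 1 :=
    fun i _ => by split <;> norm_num
  have hsum : ∑ _i : ZMod C.n, (1 : ℤ) = C.n := by simp [ZMod.card]
  rw [circulation, ← hsum, Finset.sum_eq_sum_iff_of_le hle]
  simp [IsForward]

theorem IsForward.of_circulation_eq {R R' : X.Orientation} {C : X.DCycle}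
    (hC : X.IsForward R C) (h : X.circulation R' C = X.circulation R C) :
    X.IsForward R' C :=
  circulation_eq_length_iff.1 (h.trans (circulation_eq_length_iff.2 hC))

theorem eq_of_accessible {R R' : X.Orientation} {e : X.E}
    (h : X.Accessible R (head R e) (tail R e))
    (hR' : ∀ C, X.circulation R' C = X.circulation R C) : R' e = R e := by
  obtain ⟨C, hC, i, rfl⟩ := exists_isForward_of_accessible h
  exact ((hC.of_circulation_eq (hR' C)) i).symm.trans (hC i)

theorem forced_or_forbidden_iff {c : X.DCycle → ℤ} {e : X.E} {b : Bool} :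
    (X.CForced c e b ∨ X.CForbidden c e b) ↔
      ∀ R R' : X.Orientation, (∀ C, X.circulation R C = c C) →
        (∀ C, X.circulation R' C = c C) → R e = R' e := by
  constructor
  · rintro (h | h) R R' hR hR'
    · exact (h R hR).trans (h R' hR').symm
    · exact (Bool.eq_not.2 (h R hR)).trans (Bool.eq_not.2 (h R' hR')).symm
  · intro h
    by_cases hb : ∃ R₀ : X.Orientation, (∀ C, X.circulation R₀ C = c C) ∧ R₀ e = b
    · obtain ⟨R₀, hR₀, rfl⟩ := hb
      exact .inl fun R hR => h R R₀ hR hR₀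
    · push Not at hb
      exact .inr hb

end Multigraph

theorem forced_or_forbidden_iff_same_accessibility_class_general
    (X : Multigraph)
    (c : X.DCycle → ℤ)
    (e : X.E) (b : Bool) :
    (X.CForced c e b ∨ X.CForbidden c e b) ↔
    (∀ R : X.Orientation, (∀ C : X.DCycle, X.circulation R C = c C) →
      X.MutuallyAccessible R (X.src e) (X.tgt e)) := by
  simp only [Multigraph.forced_or_forbidden_iff, Multigraph.mutuallyAccessible_src_tgt_iff]
  constructor
  · intro h R hR
    by_contra hacc
    obtain ⟨R', hR', hne⟩ := Multigraph.exists_ne_of_not_accessible hacc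
    exact hne (h R' R (fun C => (hR' C).trans (hR C)) hR)
  · intro h R R' hR hR'
    exact Multigraph.eq_of_accessible (h R' hR') fun C => (hR C).trans (hR' C).symm

/-- (Propp's Proposition 4, extended to loops.)  Let `c` be a feasible
circulation function and `(e, b)` a directed edge.  Then `(e, b)` is `c`-forced or
`c`-forbidden if and only if the endpoints of `e` belong to the same accessibility
class of `c` (i.e. are mutually accessible relative to every — equivalently, some —
orientation with circulation `c`). -/
theorem forced_or_forbidden_iff_same_accessibility_class
    (X : Multigraph) [Fintype X.V] [Fintype X.E]
    (c : X.DCycle → ℤ)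
    (hc : ∃ R : X.Orientation, ∀ C : X.DCycle, X.circulation R C = c C)
    (e : X.E) (b : Bool) :
    (X.CForced c e b ∨ X.CForbidden c e b) ↔
    (∀ R : X.Orientation, (∀ C : X.DCycle, X.circulation R C = c C) →
      X.MutuallyAccessible R (X.src e) (X.tgt e)) :=
  forced_or_forbidden_iff_same_accessibility_class_general X c e b
end

section
/- Let X be a finite multigraph with at least one perfect matching, and let X_0 be its reduction (obtained by removing every edge that lies in no perfect matching). Then every connected component Y of X_0 either (a) consists of a single edge between two distinct vertices, and that edge lies in every perfect matching of X, or (b) every edge of Y lies in some but not all perfect matchings of X. -/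
namespace Multigraph

/-- An endpoint of an edge selected by a side: `true` selects `src`, `false` selects `tgt`. -/
def endpointAt (X : Multigraph) (p : X.E × Bool) : X.V :=
  if p.2 then X.src p.1 else X.tgt p.1

/-- A perfect matching: a set of edges such that every vertex occurs exactly once
among the endpoints (counted with multiplicity) of edges of the matching. -/
def IsPerfectMatching (X : Multigraph) (M : Set X.E) : Prop :=
  ∀ v : X.V, ∃! p : X.E × Bool, p.1 ∈ M ∧ X.endpointAt p = v

/-- An edge is forced if it appears in every perfect matching. -/
def Forced (X : Multigraph) (e : X.E) : Prop :=
  ∀ M : Set X.E, X.IsPerfectMatching M → e ∈ M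

/-- An edge is forbidden if it appears in no perfect matching. -/
def Forbidden (X : Multigraph) (e : X.E) : Prop :=
  ∀ M : Set X.E, X.IsPerfectMatching M → e ∉ M

/-- Adjacency in the reduction `X₀` of `X` (the graph obtained by deleting all
forbidden edges): two vertices joined by a non-forbidden edge. -/
def Adj₀ (X : Multigraph) (x y : X.V) : Prop :=
  ∃ e : X.E, ¬ X.Forbidden e ∧
    ((X.src e = x ∧ X.tgt e = y) ∨ (X.src e = y ∧ X.tgt e = x))

/-- Two (non-forbidden) edges lie in the same connected component of the
reduction `X₀`. -/
def SameComp₀ (X : Multigraph) (e e' : X.E) : Prop :=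
  Relation.ReflTransGen X.Adj₀ (X.src e) (X.src e')

end Multigraph

/-!
In a perfect matching every vertex is covered exactly once, so a forced edge `e` shares no
endpoint with any other non-forbidden edge: that edge lies in some perfect matching, which also
contains `e`. Hence the component of `e` in the reduction is `e` alone. Conversely, a component
containing a forced edge is that edge, so in any other component no edge is forced.
-/

namespace Multigraph

variable {X : Multigraph}

theorem IsPerfectMatching.eq_of_endpointAt_eq {M : Set X.E} (hM : X.IsPerfectMatching M)
    {e f : X.E} {b b' : Bool} (he : e ∈ M) (hf : f ∈ M)
    (h : X.endpointAt (f, b) = X.endpointAt (e, b')) : f = e ∧ b = b' := by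
  obtain ⟨p, -, hp⟩ := hM (X.endpointAt (e, b'))
  exact Prod.ext_iff.mp ((hp (f, b) ⟨hf, h⟩).trans (hp (e, b') ⟨he, rfl⟩).symm)

theorem exists_isPerfectMatching_mem_of_not_forbidden {e : X.E} (he : ¬ X.Forbidden e) :
    ∃ M : Set X.E, X.IsPerfectMatching M ∧ e ∈ M := by
  simpa [Forbidden] using he

theorem src_ne_tgt_of_not_forbidden {e : X.E} (he : ¬ X.Forbidden e) : X.src e ≠ X.tgt e := by
  obtain ⟨M, hM, heM⟩ := exists_isPerfectMatching_mem_of_not_forbidden he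
  intro hloop
  have h : X.endpointAt (e, false) = X.endpointAt (e, true) := by simp [endpointAt, hloop]
  simpa using (hM.eq_of_endpointAt_eq heM heM h).2

theorem Forced.eq_of_endpointAt_eq {e f : X.E} (hF : X.Forced e) (hf : ¬ X.Forbidden f)
    {b b' : Bool} (h : X.endpointAt (f, b) = X.endpointAt (e, b')) : f = e := by
  obtain ⟨M, hM, hfM⟩ := exists_isPerfectMatching_mem_of_not_forbidden hf
  exact (hM.eq_of_endpointAt_eq (hF M hM) hfM h).1

theorem Forced.exists_endpointAt_eq_of_reflTransGen_adj₀ {e : X.E} (hF : X.Forced e) {v : X.V}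
    (h : Relation.ReflTransGen X.Adj₀ (X.src e) v) : ∃ b, X.endpointAt (e, b) = v := by
  induction h with
  | refl => exact ⟨true, rfl⟩
  | tail _ hstep ih =>
    obtain ⟨b', rfl⟩ := ih
    obtain ⟨f, hf, ⟨hsrc, htgt⟩ | ⟨htgt, hsrc⟩⟩ := hstep
    · obtain rfl := hF.eq_of_endpointAt_eq hf (b := true) (b' := b') hsrc
      exact ⟨false, htgt⟩
    · obtain rfl := hF.eq_of_endpointAt_eq hf (b := false) (b' := b') hsrc
      exact ⟨true, htgt⟩

theorem Forced.eq_of_sameComp₀ {e e' : X.E} (hF : X.Forced e) (he' : ¬ X.Forbidden e')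
    (h : X.SameComp₀ e e') : e' = e := by
  obtain ⟨b, hb⟩ := hF.exists_endpointAt_eq_of_reflTransGen_adj₀ h
  exact hF.eq_of_endpointAt_eq he' (b := true) hb.symm

instance : Std.Symm X.Adj₀ where
  symm _ _ := fun ⟨e, he, h⟩ => ⟨e, he, h.symm⟩

theorem SameComp₀.symm {e e' : X.E} (h : X.SameComp₀ e e') : X.SameComp₀ e' e :=
  _root_.symm (r := Relation.ReflTransGen X.Adj₀) h

end Multigraph

theorem reduction_components_forced_or_free_general
    (X : Multigraph) :
    ∀ e : X.E, ¬ X.Forbidden e →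
      (X.Forced e ∧ X.src e ≠ X.tgt e ∧
        (∀ e' : X.E, ¬ X.Forbidden e' → X.SameComp₀ e e' → e' = e)) ∨
      (∀ e' : X.E, ¬ X.Forbidden e' → X.SameComp₀ e e' →
        ¬ X.Forced e' ∧ ¬ X.Forbidden e') := by
  intro e he
  by_cases hF : X.Forced e
  · exact .inl ⟨hF, Multigraph.src_ne_tgt_of_not_forbidden he,
      fun _ he' h => hF.eq_of_sameComp₀ he' h⟩
  · refine .inr fun e' he' h => ⟨fun hF' => hF ?_, he'⟩
    exact hF'.eq_of_sameComp₀ he h.symm ▸ hF'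

/-- Let `X` be a finite multigraph with at least one perfect matching,
and `X₀` its reduction (delete all forbidden edges).  Then every connected component
`Y` of `X₀` either (a) consists of a single edge between two distinct vertices, and
that edge is forced, or (b) every edge of `Y` is neither forced nor forbidden. -/
theorem reduction_components_forced_or_free
    (X : Multigraph) [Fintype X.V] [Fintype X.E]
    (hne : ∃ M : Set X.E, X.IsPerfectMatching M) :
    ∀ e : X.E, ¬ X.Forbidden e →
      (X.Forced e ∧ X.src e ≠ X.tgt e ∧
        (∀ e' : X.E, ¬ X.Forbidden e' → X.SameComp₀ e e' → e' = e)) ∨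
      (∀ e' : X.E, ¬ X.Forbidden e' → X.SameComp₀ e e' →
        ¬ X.Forced e' ∧ ¬ X.Forbidden e') :=
  reduction_components_forced_or_free_general X
end

section
/- Let M and M' be perfect matchings of a finite graph G related by twisting along the boundary of a positive or negative alternating subsurface Δ, and let R, R' be the corresponding prescribed orientations of the dual graph G^⊥. Then R and R' differ precisely on the edges of G^⊥ dual to the boundary edges of Δ, and R and R' have the same circulation function on all directed cycles of G^⊥. -/
namespace Multigraph

open scoped Classical in
/-- The prescribed orientation of the dual graph `G^⊥` corresponding to a matching
`M` of `G`: obtained from the standard orientation `R₀` by reversing the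
orientations of the (dual) edges of `M`.  (Here the edges of `G^⊥` are identified
with the edges of `G` via duality.) -/
noncomputable def prescribed (X : Multigraph) (R₀ : X.Orientation) (M : Set X.E) :
    X.Orientation :=
  fun e => if e ∈ M then !(R₀ e) else R₀ e

/-- The edge `e` of the dual graph crosses the boundary of the subsurface `Δ`,
where `K` is the set of dual vertices lying in `Δ`: exactly one endpoint of `e`
lies in `K`.  These are precisely the edges dual to the `G`-boundary edges of `Δ`. -/
def Crosses (X : Multigraph) (K : Set X.V) (e : X.E) : Prop :=
  (X.src e ∈ K ∧ X.tgt e ∉ K) ∨ (X.src e ∉ K ∧ X.tgt e ∈ K)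

/-- The oriented edge `e` (oriented by `R`) points out of the vertex set `K`:
its tail lies in `K`. -/
def TailIn (X : Multigraph) (R : X.Orientation) (K : Set X.V) (e : X.E) : Prop :=
  (cond (R e) (X.src e) (X.tgt e)) ∈ K

end Multigraph


namespace Multigraph

open scoped Classical in
private noncomputable def chi (X : Multigraph) (K : Set X.V) (C : X.DCycle)
    (i : ZMod C.n) : ℤ :=
  if (cond (C.dir i) (X.src (C.edge i)) (X.tgt (C.edge i))) ∈ K then 1 else 0

private lemma circ_helper (X : Multigraph) (R R' : X.Orientation) (K : Set X.V)
    (hsame : ∀ e, ¬ X.Crosses K e → R' e = R e)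
    (hflip : ∀ e, X.Crosses K e → R' e = !(R e))
    (hin : ∀ e, X.Crosses K e → X.TailIn R K e)
    (C : X.DCycle) : X.circulation R C = X.circulation R' C := by
  haveI : NeZero C.n := ⟨C.npos.ne'⟩
  classical
  have key : ∀ i : ZMod C.n,
      (if C.dir i = R (C.edge i) then (1:ℤ) else -1) =
      (if C.dir i = R' (C.edge i) then (1:ℤ) else -1)
        + 2 * (X.chi K C i - X.chi K C (i+1)) := by
    intro i
    have hht := C.head_eq_tail i
    have hχ1 : X.chi K C (i+1) =
        if (cond (C.dir i) (X.tgt (C.edge i)) (X.src (C.edge i))) ∈ K then 1 else 0 := by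
      simp only [chi, ← hht]
    clear hht
    by_cases hc : X.Crosses K (C.edge i)
    · have h1 := hflip _ hc
      have h2 := hin _ hc
      unfold TailIn at h2
      rw [hχ1]
      rcases hc with ⟨hs, ht⟩ | ⟨hs, ht⟩ <;>
        cases hR : R (C.edge i) <;> cases hd : C.dir i <;>
          simp_all [chi]
    · have h1 := hsame _ hc
      have hnc : (X.src (C.edge i) ∈ K ↔ X.tgt (C.edge i) ∈ K) := by
        unfold Crosses at hc
        tauto
      rw [hχ1]
      by_cases hm : X.src (C.edge i) ∈ K <;> have hm2 := hnc.mp <;>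
        cases hd : C.dir i <;> simp_all [chi]
  have hsum0 : ∑ i : ZMod C.n, (X.chi K C i - X.chi K C (i+1)) = 0 := by
    rw [Finset.sum_sub_distrib]
    have : ∑ i : ZMod C.n, X.chi K C (i+1) = ∑ i : ZMod C.n, X.chi K C i :=
      Fintype.sum_equiv (Equiv.addRight (1 : ZMod C.n)) _ _ (fun i => rfl)
    omega
  unfold circulation
  calc (∑ i : ZMod C.n, if C.dir i = R (C.edge i) then (1:ℤ) else -1)
      = ∑ i : ZMod C.n, ((if C.dir i = R' (C.edge i) then (1:ℤ) else -1)
          + 2 * (X.chi K C i - X.chi K C (i+1))) :=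
        Finset.sum_congr rfl (fun i _ => key i)
    _ = (∑ i : ZMod C.n, if C.dir i = R' (C.edge i) then (1:ℤ) else -1)
          + 2 * ∑ i : ZMod C.n, (X.chi K C i - X.chi K C (i+1)) := by
        rw [Finset.sum_add_distrib, Finset.mul_sum]
    _ = ∑ i : ZMod C.n, if C.dir i = R' (C.edge i) then (1:ℤ) else -1 := by
        rw [hsum0]; ring

end Multigraph

/-- (Surface twisting preserves circulation.)  Let `M` and `M'` be
perfect matchings of `G` related by twisting along the boundary of a positive or
negative alternating subsurface `Δ`, i.e. `M' = M + ∂_G Δ` (symmetric difference),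
where — passing to the dual `G^⊥`, whose vertices in `Δ` form the set `K` — the
boundary edges of `Δ` are exactly the dual edges crossing `K`, and positivity
(resp. negativity) of `Δ` means the prescribed orientation `R_M` orients every
crossing edge into (resp. out of) `K`.  Then the prescribed orientations
`R = R_M` and `R' = R_{M'}` differ precisely on the edges dual to the boundary
edges of `Δ`, and have the same circulation on every directed cycle of `G^⊥`. -/
theorem surface_twisting_preserves_circulation
    (X : Multigraph) [Fintype X.V] [Fintype X.E]
    (R₀ : X.Orientation) (M M' : Set X.E) (K : Set X.V)
    (hM' : M' = symmDiff M {e : X.E | X.Crosses K e})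
    (hpos : (∀ e : X.E, X.Crosses K e → X.TailIn (X.prescribed R₀ M) K e) ∨
            (∀ e : X.E, X.Crosses K e → ¬ X.TailIn (X.prescribed R₀ M) K e)) :
    (∀ e : X.E, X.prescribed R₀ M e ≠ X.prescribed R₀ M' e ↔ X.Crosses K e) ∧
    (∀ C : X.DCycle,
      X.circulation (X.prescribed R₀ M) C = X.circulation (X.prescribed R₀ M') C) := by
  classical
  set R := X.prescribed R₀ M with hR
  set R' := X.prescribed R₀ M' with hR'
  have hA : ∀ e, R' e = if X.Crosses K e then !(R e) else R e := by
    intro e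
    by_cases hc : X.Crosses K e <;> by_cases hm : e ∈ M <;>
      simp [hR, hR', Multigraph.prescribed, hM', Set.mem_symmDiff, Set.mem_setOf_eq, hc, hm]
  have hsame : ∀ e, ¬ X.Crosses K e → R' e = R e := fun e hc => by simp [hA, hc]
  have hflip : ∀ e, X.Crosses K e → R' e = !(R e) := fun e hc => by simp [hA, hc]
  constructor
  · intro e
    constructor
    · intro hne
      by_contra hc
      exact hne ((hsame e hc).symm)
    · intro hc
      rw [hflip e hc]
      cases h : R e <;> simp
  · intro C
    rcases hpos with hin | hout
    · exact X.circ_helper R R' K hsame hflip hin C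
    · have hsame' : ∀ e, ¬ X.Crosses K e → R e = R' e := fun e hc => (hsame e hc).symm
      have hflip' : ∀ e, X.Crosses K e → R e = !(R' e) := fun e hc => by
        rw [hflip e hc, Bool.not_not]
      have hin' : ∀ e, X.Crosses K e → X.TailIn R' K e := by
        intro e hc
        have h2 := hout e hc
        unfold Multigraph.TailIn at h2 ⊢
        rw [hflip e hc]
        rcases hc with ⟨hs, ht⟩ | ⟨hs, ht⟩ <;> cases h : R e <;> simp_all
      exact (X.circ_helper R' R K hsame' hflip' hin' C).symm
end
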